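/- (Theorem 17 of the paper) Let P₁ and P₂ be dense sets of infinite binary strings (dense subsets of the Cantor space 2^ω). Then for every ordinal α < ω², Player II has a winning strategy in the propositional game EFB^P_α(P₁,P₂); that is, WinI^P(P₁,P₂,α) fails for every α < ω². -/

import Mathlib

/-- Propositional `L_{ω₁ω}`-formulas over propositional symbols `p i`, `i : ℕ`,
in negation normal form. -/
inductive PFml : Type
  | pos : ℕ → PFml
  | neg : ℕ → PFml
  | and : PFml → PFml → PFml
  | or : PFml → PFml → PFml
  | iand : (ℕ → PFml) → PFml
  | ior : (ℕ → PFml) → PFml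

/-- Satisfaction of a propositional formula by an infinite binary string. -/
def PSat (t : ℕ → Bool) : PFml → Prop
  | .pos i => t i = true
  | .neg i => t i = false
  | .and φ ψ => PSat t φ ∧ PSat t ψ
  | .or φ ψ => PSat t φ ∨ PSat t ψ
  | .iand f => ∀ i : ℕ, PSat t (f i)
  | .ior f => ∃ i : ℕ, PSat t (f i)

namespace Ordinal

universe u

/-- Natural addition of ordinals (removed from Mathlib; restored with its old definition). -/
noncomputable def nadd : Ordinal.{u} → Ordinal.{u} → Ordinal.{u}
  | a, b =>
    max (blsub.{u, u} a fun a' _ => nadd a' b) (blsub.{u, u} b fun b' _ => nadd a b')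
termination_by a b => (a, b)
decreasing_by
  all_goals first
    | exact Prod.Lex.left _ _ (by assumption)
    | exact Prod.Lex.right _ (by assumption)

end Ordinal

/-- Finite partial natural (Hessenberg) sums. -/
noncomputable def natSumPrefix (γ : ℕ → Ordinal) : ℕ → Ordinal
  | 0 => 0
  | n + 1 => Ordinal.nadd (natSumPrefix γ n) (γ n)

/-- The infinite natural sum. -/
noncomputable def inatSum (γ : ℕ → Ordinal) : Ordinal := ⨆ n : ℕ, natSumPrefix γ n


noncomputable def psize : PFml → Ordinal
  | .pos _ => 1
  | .neg _ => 1
  | .and φ ψ => Ordinal.nadd (psize φ) (psize ψ)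
  | .or φ ψ => Ordinal.nadd (psize φ) (psize ψ)
  | .iand f => inatSum fun i => psize (f i)
  | .ior f => inatSum fun i => psize (f i)

/-- Player I has a winning strategy in the propositional game `EFB^P_γ(𝔄, 𝔅)`. -/
inductive WinIP : Set (ℕ → Bool) → Set (ℕ → Bool) → Ordinal → Prop
  | lit {𝔄 𝔅 : Set (ℕ → Bool)} {γ : Ordinal} (i : ℕ) (b : Bool) :
      (∀ t ∈ 𝔄, t i = b) → (∀ t ∈ 𝔅, t i ≠ b) → WinIP 𝔄 𝔅 γ
  | splitL {𝔄 𝔅 : Set (ℕ → Bool)} {γ : Ordinal} (𝔄₁ 𝔄₂ : Set (ℕ → Bool))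
      (γ₁ γ₂ : Ordinal) : 𝔄 = 𝔄₁ ∪ 𝔄₂ → γ₁ ≠ 0 → γ₂ ≠ 0 → Ordinal.nadd γ₁ γ₂ ≤ γ →
      WinIP 𝔄₁ 𝔅 γ₁ → WinIP 𝔄₂ 𝔅 γ₂ → WinIP 𝔄 𝔅 γ
  | splitR {𝔄 𝔅 : Set (ℕ → Bool)} {γ : Ordinal} (𝔅₁ 𝔅₂ : Set (ℕ → Bool))
      (γ₁ γ₂ : Ordinal) : 𝔅 = 𝔅₁ ∪ 𝔅₂ → γ₁ ≠ 0 → γ₂ ≠ 0 → Ordinal.nadd γ₁ γ₂ ≤ γ →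
      WinIP 𝔄 𝔅₁ γ₁ → WinIP 𝔄 𝔅₂ γ₂ → WinIP 𝔄 𝔅 γ
  | isplitL {𝔄 𝔅 : Set (ℕ → Bool)} {γ : Ordinal} (𝔄s : ℕ → Set (ℕ → Bool))
      (γs : ℕ → Ordinal) : 𝔄 = ⋃ i, 𝔄s i → (∀ i, γs i ≠ 0) → inatSum γs ≤ γ →
      (∀ i, WinIP (𝔄s i) 𝔅 (γs i)) → WinIP 𝔄 𝔅 γ
  | isplitR {𝔄 𝔅 : Set (ℕ → Bool)} {γ : Ordinal} (𝔅s : ℕ → Set (ℕ → Bool))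
      (γs : ℕ → Ordinal) : 𝔅 = ⋃ i, 𝔅s i → (∀ i, γs i ≠ 0) → inatSum γs ≤ γ →
      (∀ i, WinIP 𝔄 (𝔅s i) (γs i)) → WinIP 𝔄 𝔅 γ

/-!
If Player I wins `EFB^P_γ(A, B)`, then the closures of `A` and `B` have no common interior point
when `γ < ω²`, and each side even misses the closure of the other when `γ < ω` (`Apart γ A B`).
A literal is a clopen condition, so it separates the closures completely, and both properties
survive finite unions. A countable split already costs rank `ω`, and below `ω²` all but finitely
many of its parts have finite rank. Removing the closures of the finitely many others from a
putative common interior still leaves a nonempty open set; a point of the split side in it lies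
in a finite-rank part, hence outside the closure of the other side. Two dense sets, finally, have
the whole space as common interior of their closures.
-/

open Set Ordinal

namespace Ordinal

theorem nadd_lt_nadd_left {a a' : Ordinal} (h : a' < a) (b : Ordinal) : nadd a' b < nadd a b := by
  rw [nadd.eq_1 a b]
  exact (lt_blsub (fun a' _ => nadd a' b) a' h).trans_le (le_max_left _ _)

theorem nadd_lt_nadd_right (a : Ordinal) {b b' : Ordinal} (h : b' < b) : nadd a b' < nadd a b := by
  rw [nadd.eq_1 a b]
  exact (lt_blsub (fun b' _ => nadd a b') b' h).trans_le (le_max_right _ _)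

theorem le_self_nadd (a b : Ordinal) : a ≤ nadd a b := by
  induction a using WellFoundedLT.induction with
  | _ a ih => exact le_of_forall_lt fun c hc => (ih c hc).trans_lt (nadd_lt_nadd_left hc b)

theorem add_le_nadd (a b : Ordinal) : a + b ≤ nadd a b := by
  induction b using WellFoundedLT.induction with
  | _ b ih =>
    refine le_of_forall_lt fun c hc => ?_
    rcases lt_or_ge c a with hca | hac
    · exact hca.trans_le (le_self_nadd a b)
    · obtain ⟨d, rfl⟩ := le_iff_exists_add.1 hac
      have hdb : d < b := (add_lt_add_iff_left a).1 hc
      exact (ih d hdb).trans_lt (nadd_lt_nadd_right a hdb)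

theorem le_nadd_self (a b : Ordinal) : b ≤ nadd a b :=
  le_add_self.trans (add_le_nadd a b)

end Ordinal

section NaturalSum

variable {γ : ℕ → Ordinal}

theorem natSumPrefix_add_le (γ : ℕ → Ordinal) (n : ℕ) :
    natSumPrefix γ n + γ n ≤ natSumPrefix γ (n + 1) :=
  add_le_nadd _ _

theorem natSumPrefix_mono (γ : ℕ → Ordinal) : Monotone (natSumPrefix γ) :=
  monotone_nat_of_le_succ fun n => le_self_add.trans (natSumPrefix_add_le γ n)

theorem natSumPrefix_le_inatSum (γ : ℕ → Ordinal) (n : ℕ) : natSumPrefix γ n ≤ inatSum γ :=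
  Ordinal.le_iSup (natSumPrefix γ) n

theorem le_inatSum (γ : ℕ → Ordinal) (i : ℕ) : γ i ≤ inatSum γ :=
  le_add_self.trans ((natSumPrefix_add_le γ i).trans (natSumPrefix_le_inatSum γ _))

theorem natCast_le_natSumPrefix (h : ∀ i, γ i ≠ 0) (n : ℕ) : (n : Ordinal) ≤ natSumPrefix γ n := by
  induction n with
  | zero => simp [natSumPrefix]
  | succ n ih =>
    calc ((n + 1 : ℕ) : Ordinal) = n + 1 := by push_cast; rfl
      _ ≤ natSumPrefix γ n + γ n := add_le_add ih (Order.one_le_iff_ne_zero.2 (h n))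
      _ ≤ natSumPrefix γ (n + 1) := natSumPrefix_add_le γ n

theorem omega0_le_inatSum (h : ∀ i, γ i ≠ 0) : ω ≤ inatSum γ :=
  omega0_le.2 fun n => (natCast_le_natSumPrefix h n).trans (natSumPrefix_le_inatSum γ n)

theorem exists_omega0_mul_le_natSumPrefix (h : ∀ N, ∃ i, N ≤ i ∧ ω ≤ γ i) (k : ℕ) :
    ∃ n, ω * k ≤ natSumPrefix γ n := by
  induction k with
  | zero => exact ⟨0, by simp⟩
  | succ k ih =>
    obtain ⟨n, hn⟩ := ih
    obtain ⟨i, hni, hωi⟩ := h n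
    refine ⟨i + 1, ?_⟩
    calc ω * ((k + 1 : ℕ) : Ordinal) = ω * k + ω := by push_cast; rw [mul_add, mul_one]
      _ ≤ natSumPrefix γ i + γ i := add_le_add (hn.trans (natSumPrefix_mono γ hni)) hωi
      _ ≤ natSumPrefix γ (i + 1) := natSumPrefix_add_le γ i

theorem exists_forall_lt_omega0_of_inatSum_lt (h : inatSum γ < ω * ω) :
    ∃ N, ∀ i, N ≤ i → γ i < ω := by
  by_contra! hc
  refine h.not_ge ((mul_le_iff_of_isSuccLimit isSuccLimit_omega0).2 fun b hb => ?_)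
  obtain ⟨k, rfl⟩ := lt_omega0.1 hb
  obtain ⟨n, hn⟩ := exists_omega0_mul_le_natSumPrefix hc k
  exact hn.trans (natSumPrefix_le_inatSum γ n)

end NaturalSum

section Topology

variable {X : Type*} [TopologicalSpace X]

theorem interior_biUnion_finset_eq_empty {ι : Type*} {F : ι → Set X} (s : Finset ι)
    (hc : ∀ i ∈ s, IsClosed (F i)) (he : ∀ i ∈ s, interior (F i) = ∅) :
    interior (⋃ i ∈ s, F i) = ∅ := by
  classical
  induction s using Finset.induction_on with
  | empty => simp
  | insert a s _ ih =>
    rw [Finset.set_biUnion_insert, interior_union_isClosed_of_interior_empty (hc a (by simp))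
      (ih (fun i hi => hc i (Finset.mem_insert_of_mem hi))
        (fun i hi => he i (Finset.mem_insert_of_mem hi)))]
    exact he a (by simp)

theorem interior_closure_iUnion_inter_closure_eq_empty {As : ℕ → Set X} {B : Set X} (N : ℕ)
    (hint : ∀ i, interior (closure (As i) ∩ closure B) = ∅)
    (hdisj : ∀ i, N ≤ i → Disjoint (As i) (closure B)) :
    interior (closure (⋃ i, As i) ∩ closure B) = ∅ := by
  set U := interior (closure (⋃ i, As i) ∩ closure B)
  set F := ⋃ i ∈ Finset.range N, closure (As i) ∩ closure B
  have hF : IsClosed F := isClosed_biUnion_finset fun i _ => isClosed_closure.inter isClosed_closure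
  have hFint : interior F = ∅ := interior_biUnion_finset_eq_empty _
    (fun i _ => isClosed_closure.inter isClosed_closure) (fun i _ => hint i)
  by_contra hU
  obtain ⟨x, hxU, hxF⟩ : (U \ F).Nonempty := by
    refine sdiff_nonempty.2 fun hUF => hU ?_
    rw [← subset_empty_iff, ← hFint]
    exact interior_maximal hUF isOpen_interior
  obtain ⟨v, ⟨hvU, hvF⟩, hvA⟩ :=
    mem_closure_iff.1 (interior_subset hxU).1 _ (isOpen_interior.sdiff hF) ⟨hxU, hxF⟩
  obtain ⟨j, hj⟩ := mem_iUnion.1 hvA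
  have hvB : v ∈ closure B := (interior_subset hvU).2
  rcases lt_or_ge j N with hjN | hjN
  · exact hvF (mem_biUnion (Finset.mem_range.2 hjN) ⟨subset_closure hj, hvB⟩)
  · exact (hdisj j hjN).notMem_of_mem_left hj hvB

def Apart (γ : Ordinal) (A B : Set X) : Prop :=
  (γ < ω * ω → interior (closure A ∩ closure B) = ∅) ∧
    (γ < ω → Disjoint A (closure B) ∧ Disjoint (closure A) B)

namespace Apart

variable {γ γ' : Ordinal} {A A₁ A₂ B : Set X}

theorem symm (h : Apart γ A B) : Apart γ B A :=
  ⟨fun hγ => inter_comm (closure B) _ ▸ h.1 hγ, fun hγ => ⟨(h.2 hγ).2.symm, (h.2 hγ).1.symm⟩⟩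

theorem of_le (h : Apart γ' A B) (hle : γ' ≤ γ) : Apart γ A B :=
  ⟨fun hγ => h.1 (hle.trans_lt hγ), fun hγ => h.2 (hle.trans_lt hγ)⟩

theorem of_disjoint_closure (h : Disjoint (closure A) (closure B)) : Apart γ A B :=
  ⟨fun _ => by rw [h.inter_eq, interior_empty],
    fun _ => ⟨h.mono_left subset_closure, h.mono_right subset_closure⟩⟩

theorem union_left (h₁ : Apart γ A₁ B) (h₂ : Apart γ A₂ B) : Apart γ (A₁ ∪ A₂) B := by
  refine ⟨fun hγ => ?_, fun hγ => ?_⟩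
  · rw [closure_union, union_inter_distrib_right, interior_union_isClosed_of_interior_empty
      (isClosed_closure.inter isClosed_closure) (h₂.1 hγ)]
    exact h₁.1 hγ
  · rw [closure_union]
    exact ⟨disjoint_union_left.2 ⟨(h₁.2 hγ).1, (h₂.2 hγ).1⟩,
      disjoint_union_left.2 ⟨(h₁.2 hγ).2, (h₂.2 hγ).2⟩⟩

theorem iUnion_left {As : ℕ → Set X} {γs : ℕ → Ordinal} (h : ∀ i, Apart (γs i) (As i) B)
    (hne : ∀ i, γs i ≠ 0) (hsum : inatSum γs ≤ γ) : Apart γ (⋃ i, As i) B := by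
  have hω : ω ≤ γ := (omega0_le_inatSum hne).trans hsum
  refine ⟨fun hγ => ?_, fun hγ => absurd hγ hω.not_gt⟩
  obtain ⟨N, hN⟩ := exists_forall_lt_omega0_of_inatSum_lt (hsum.trans_lt hγ)
  exact interior_closure_iUnion_inter_closure_eq_empty N
    (fun i => (h i).1 (((le_inatSum γs i).trans hsum).trans_lt hγ))
    (fun i hi => ((h i).2 (hN i hi)).1)

end Apart

end Topology

theorem WinIP.apart {A B : Set (ℕ → Bool)} {γ : Ordinal} (h : WinIP A B γ) : Apart γ A B := by
  induction h with
  | lit i b hA hB =>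
    have hC : IsClopen {t : ℕ → Bool | t i = b} :=
      (isClopen_discrete {b}).preimage (continuous_apply i)
    exact Apart.of_disjoint_closure <| disjoint_compl_right.mono
      (hC.isClosed.closure_subset_iff.2 hA) (hC.compl.isClosed.closure_subset_iff.2 hB)
  | splitL _ _ γ₁ γ₂ hA _ _ hle _ _ ih₁ ih₂ =>
    subst hA
    exact (ih₁.of_le ((le_self_nadd γ₁ γ₂).trans hle)).union_left
      (ih₂.of_le ((le_nadd_self γ₁ γ₂).trans hle))
  | splitR _ _ γ₁ γ₂ hB _ _ hle _ _ ih₁ ih₂ =>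
    subst hB
    exact ((ih₁.symm.of_le ((le_self_nadd γ₁ γ₂).trans hle)).union_left
      (ih₂.symm.of_le ((le_nadd_self γ₁ γ₂).trans hle))).symm
  | isplitL _ _ hA hne hsum _ ih =>
    subst hA
    exact Apart.iUnion_left ih hne hsum
  | isplitR _ _ hB hne hsum _ ih =>
    subst hB
    exact (Apart.iUnion_left (fun i => (ih i).symm) hne hsum).symm

/-- For dense `P₁, P₂ ⊆ 2^ω`, Player II has a winning strategy in
`EFB^P_α(P₁, P₂)` for every `α < ω²`, i.e. Player I has none. -/
theorem not_winIP_of_dense (P₁ P₂ : Set (ℕ → Bool)) (h₁ : Dense P₁) (h₂ : Dense P₂)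
    (α : Ordinal) (hα : α < Ordinal.omega0 * Ordinal.omega0) : ¬ WinIP P₁ P₂ α := by
  intro hw
  have hint := hw.apart.1 hα
  rw [h₁.closure_eq, h₂.closure_eq, inter_self, interior_univ] at hint
  exact univ_nonempty.ne_empty hint
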